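/- arXiv:2502.10752 — 8 statements merged into one kernel-verified Lean document; each statement's English description precedes it below -/
import Mathlib

section
/- Let f: M → M be a homeomorphism of a compact metric space and let K ⊂ M be a compact set consisting of positively shadowable points. Then for every ε > 0 there exists δ > 0 such that every one-sided δ-pseudo-orbit (x_i)_{i≥0} with x_0 within distance δ of K is ε-shadowed. -/
open Function Metric

/-- A one-sided `δ`-pseudo-orbit for `f`. -/
def IsPO {M : Type*} [MetricSpace M] (f : M → M) (δ : ℝ) (y : ℕ → M) : Prop :=
  ∀ i, dist (f (y i)) (y (i + 1)) ≤ δ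

/-- A one-sided sequence is `ε`-shadowed by a true orbit. -/
def IsShadowed {M : Type*} [MetricSpace M] (f : M → M) (ε : ℝ) (y : ℕ → M) : Prop :=
  ∃ z : M, ∀ i, dist (f^[i] z) (y i) ≤ ε

/-- A point is positively shadowable: every one-sided `δ`-pseudo-orbit starting
at `x` is `ε`-shadowed, for suitable `δ = δ(ε)`. -/
def PosShadowable {M : Type*} [MetricSpace M] (f : M → M) (x : M) : Prop :=
  ∀ ε > 0, ∃ δ > 0, ∀ y : ℕ → M, y 0 = x → IsPO f δ y → IsShadowed f ε y

/-- There is a finite `δ`-pseudo-orbit (of positive length) from `a` to `b`. -/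
def ChainFrom {M : Type*} [MetricSpace M] (f : M → M) (δ : ℝ) (a b : M) : Prop :=
  ∃ (n : ℕ) (c : ℕ → M), 0 < n ∧ c 0 = a ∧ c n = b ∧ ∀ i < n, dist (f (c i)) (c (i + 1)) ≤ δ

/-- `a → b`: for every `δ > 0` there is a finite `δ`-pseudo-orbit from `a` to `b`. -/
def ChainLe {M : Type*} [MetricSpace M] (f : M → M) (a b : M) : Prop :=
  ∀ δ > 0, ChainFrom f δ a b

/-- A chain-recurrent point. -/
def ChainRec {M : Type*} [MetricSpace M] (f : M → M) (x : M) : Prop := ChainLe f x x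

/-- The chain-recurrence class `H(x)` of `x`. -/
def ChainClass {M : Type*} [MetricSpace M] (f : M → M) (x : M) : Set M :=
  {y | ChainLe f x y ∧ ChainLe f y x}

/-- The `n`-th iterate (`n : ℤ`) of a homeomorphism. -/
def zIter {M : Type*} [TopologicalSpace M] (f : M ≃ₜ M) (n : ℤ) : M → M :=
  fun p => (f.toEquiv ^ n) p

/-- A two-sided `δ`-pseudo-orbit for `f`. -/
def IsPOZ {M : Type*} [MetricSpace M] (f : M → M) (δ : ℝ) (y : ℤ → M) : Prop :=
  ∀ i : ℤ, dist (f (y i)) (y (i + 1)) ≤ δ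

/-- uniform positive shadowing in a neighborhood of a compact set of
positively shadowable points. -/
theorem uniform_shadowing_near_compact {M : Type*} [MetricSpace M] [CompactSpace M]
    (f : M ≃ₜ M) (K : Set M) (hK : IsCompact K) (hsh : ∀ x ∈ K, PosShadowable (⇑f) x) :
    ∀ ε > 0, ∃ δ > 0, ∀ y : ℕ → M, (∃ p ∈ K, dist (y 0) p < δ) → IsPO (⇑f) δ y →
      IsShadowed (⇑f) ε y := by
  intro ε hε
  rcases K.eq_empty_or_nonempty with hKe | hKne
  · exact ⟨1, one_pos, fun y ⟨p, hp, _⟩ _ => absurd hp (by simp [hKe])⟩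
  have hf : UniformContinuous (⇑f) :=
    CompactSpace.uniformContinuous_of_continuous f.continuous
  choose δ' hδ'pos hδ' using fun (p : M) (hp : p ∈ K) => hsh p hp (ε/2) (by linarith)
  have hmod : ∀ (p : M) (hp : p ∈ K), ∃ η > 0, ∀ a b : M, dist a b < η →
      dist (f a) (f b) < δ' p hp / 2 := by
    intro p hp
    rcases Metric.uniformContinuous_iff.mp hf (δ' p hp / 2)
      (by have := hδ'pos p hp; linarith) with ⟨η, hη, h⟩
    exact ⟨η, hη, fun a b hab => h hab⟩
  choose η hηpos hη using hmod
  set r : (p : M) → p ∈ K → ℝ := fun p hp => min (η p hp) (min (δ' p hp) ε) / 4 with hr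
  have hrpos : ∀ (p : M) (hp : p ∈ K), 0 < r p hp := by
    intro p hp
    have h1 := hηpos p hp
    have h2 := hδ'pos p hp
    have : 0 < min (η p hp) (min (δ' p hp) ε) := lt_min h1 (lt_min h2 hε)
    simp only [hr]
    linarith
  obtain ⟨t, ht⟩ := hK.elim_nhds_subcover' (fun p hp => Metric.ball p (r p hp))
      (fun p hp => Metric.ball_mem_nhds p (hrpos p hp))
  obtain ⟨q, hq⟩ := hKne
  have htne : t.Nonempty := by
    rcases Set.mem_iUnion₂.mp (ht hq) with ⟨p, hpt, _⟩
    exact ⟨p, hpt⟩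
  set δ := t.inf' htne (fun p => r ↑p p.2) with hδdef
  have hδpos : 0 < δ := by
    rw [hδdef, Finset.lt_inf'_iff]
    exact fun p _ => hrpos ↑p p.2
  refine ⟨δ, hδpos, ?_⟩
  rintro y ⟨q0, hq0K, hq0⟩ hpo
  rcases Set.mem_iUnion₂.mp (ht hq0K) with ⟨p, hpt, hpball⟩
  have hδle : δ ≤ r ↑p p.2 := Finset.inf'_le _ hpt
  have hdy0 : dist (y 0) ↑p < 2 * r ↑p p.2 := by
    calc dist (y 0) ↑p ≤ dist (y 0) q0 + dist q0 ↑p := dist_triangle _ _ _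
      _ < δ + r ↑p p.2 := add_lt_add hq0 (Metric.mem_ball.mp hpball)
      _ ≤ 2 * r ↑p p.2 := by linarith
  have h4r : 4 * r ↑p p.2 = min (η ↑p p.2) (min (δ' ↑p p.2) ε) := by
    simp only [hr]; ring
  have hrη : 4 * r ↑p p.2 ≤ η ↑p p.2 := h4r ▸ min_le_left _ _
  have hrδ' : 4 * r ↑p p.2 ≤ δ' ↑p p.2 := h4r ▸ (min_le_right _ _).trans (min_le_left _ _)
  have hrε : 4 * r ↑p p.2 ≤ ε := h4r ▸ (min_le_right _ _).trans (min_le_right _ _)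
  have hηp := hηpos ↑p p.2
  have hδ'p := hδ'pos ↑p p.2
  set y' : ℕ → M := Function.update y 0 ↑p with hy'
  have hy'0 : y' 0 = ↑p := Function.update_self 0 ↑p y
  have hy's : ∀ n : ℕ, y' (n + 1) = y (n + 1) := fun n =>
    Function.update_of_ne (Nat.succ_ne_zero n) ↑p y
  have hpo' : IsPO (⇑f) (δ' ↑p p.2) y' := by
    intro i
    cases i with
    | zero =>
      rw [hy'0, hy's 0]
      have h1 : dist (f ↑p) (f (y 0)) < δ' ↑p p.2 / 2 := by
        apply hη
        rw [dist_comm]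
        linarith
      calc dist (f ↑p) (y 1) ≤ dist (f ↑p) (f (y 0)) + dist (f (y 0)) (y 1) :=
            dist_triangle _ _ _
        _ ≤ δ' ↑p p.2 / 2 + δ := add_le_add h1.le (hpo 0)
        _ ≤ δ' ↑p p.2 := by linarith
    | succ n =>
      rw [hy's n, hy's (n + 1)]
      calc dist (f (y (n + 1))) (y (n + 2)) ≤ δ := hpo (n + 1)
        _ ≤ δ' ↑p p.2 := by linarith
  obtain ⟨z, hz⟩ := hδ' ↑p p.2 y' hy'0 hpo'
  refine ⟨z, fun i => ?_⟩
  cases i with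
  | zero =>
    have h0 := hz 0
    rw [hy'0] at h0
    simp only [Function.iterate_zero, id_eq] at h0 ⊢
    calc dist z (y 0) ≤ dist z ↑p + dist ↑p (y 0) := dist_triangle _ _ _
      _ ≤ ε / 2 + 2 * r ↑p p.2 := add_le_add h0 (by rw [dist_comm]; exact hdy0.le)
      _ ≤ ε := by linarith
  | succ n =>
    have h := hz (n + 1)
    rw [hy's n] at h
    linarith
end

section
/- Let f: M → M be a homeomorphism of a compact metric space. If x is a positively shadowable chain-recurrent point, then every point of the chain-recurrence class H(x) of x is positively shadowable; moreover, the shadowing constants can be chosen uniformly: for every ε > 0 there is a single δ > 0 such that every one-sided δ-pseudo-orbit starting at any point of H(x) is ε-shadowed. -/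
open Function Metric

/-- if `x` is a positively shadowable chain-recurrent point, then every
point of `H(x)` is positively shadowable, with uniform shadowing constants. -/
theorem chainClass_posShadowable {M : Type*} [MetricSpace M] [CompactSpace M]
    (f : M ≃ₜ M) (x : M) (h1 : PosShadowable (⇑f) x) (h2 : ChainRec (⇑f) x) :
    (∀ y ∈ ChainClass (⇑f) x, PosShadowable (⇑f) y) ∧
    ∀ ε > 0, ∃ δ > 0, ∀ y : ℕ → M, y 0 ∈ ChainClass (⇑f) x → IsPO (⇑f) δ y →
      IsShadowed (⇑f) ε y := by

  have key : ∀ ε > 0, ∃ δ > 0, ∀ y : ℕ → M, y 0 ∈ ChainClass (⇑f) x → IsPO (⇑f) δ y →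
      IsShadowed (⇑f) ε y := by
    intro ε hε
    obtain ⟨δ, hδ, hshad⟩ := h1 ε hε
    refine ⟨δ, hδ, fun y hy hpo => ?_⟩
    obtain ⟨hxy, _⟩ := hy
    obtain ⟨n, c, hn, hc0, hcn, hcj⟩ := hxy δ hδ
    set w : ℕ → M := fun i => if i < n then c i else y (i - n) with hw
    have hw0 : w 0 = x := by simp [hw, hn, hc0]
    have hwpo : IsPO (⇑f) δ w := by
      intro i
      rcases lt_trichotomy (i + 1) n with h | h | h
      · have hi : i < n := Nat.lt_of_succ_lt h
        simpa [hw, hi, h] using hcj i hi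
      · have hi : i < n := by omega
        have : w (i + 1) = c n := by simp [hw, h, ← hcn]
        rw [this]
        simpa [hw, hi, ← h] using hcj i hi
      · have hi : ¬ i < n := by omega
        have hi1 : ¬ i + 1 < n := by omega
        have he : i + 1 - n = (i - n) + 1 := by omega
        simpa [hw, hi, hi1, he] using hpo (i - n)
    obtain ⟨z, hz⟩ := hshad w hw0 hwpo
    refine ⟨f^[n] z, fun i => ?_⟩
    have h1' := hz (i + n)
    have hwy : w (i + n) = y i := by simp [hw]
    rw [hwy] at h1'
    rwa [Function.iterate_add_apply] at h1'
  refine ⟨fun y hy ε hε => ?_, key⟩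
  obtain ⟨δ, hδ, hk⟩ := key ε hε
  exact ⟨δ, hδ, fun s hs0 hpo => hk s (hs0 ▸ hy) hpo⟩
end

section
/- Let f: M → M be a homeomorphism of a compact metric space. The set Sh⁺(f) of positively shadowable points contains a nonempty closed f-invariant subset if and only if Sh⁺(f) intersects the chain-recurrent set CR(f). -/
open Function Metric

section Aux

variable {M : Type*} [MetricSpace M]

lemma exists_mod [CompactSpace M] {g : M → M} (hg : Continuous g) {ε : ℝ} (hε : 0 < ε) :
    ∃ δ > 0, ∀ a b : M, dist a b ≤ δ → dist (g a) (g b) ≤ ε := by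
  have h := CompactSpace.uniformContinuous_of_continuous hg
  rw [Metric.uniformContinuous_iff] at h
  obtain ⟨δ, hδ, hd⟩ := h ε hε
  exact ⟨δ / 2, by linarith, fun a b hab => (hd (lt_of_le_of_lt hab (by linarith))).le⟩

lemma chainFrom_trans2 {f : M → M} {δ : ℝ} {a b c : M}
    (h1 : ChainFrom f δ a b) (h2 : ChainFrom f δ b c) :
    ∃ (n : ℕ) (u : ℕ → M), 2 ≤ n ∧ u 0 = a ∧ u n = c ∧
      ∀ i < n, dist (f (u i)) (u (i + 1)) ≤ δ := by
  obtain ⟨n, u, hn, hu0, hun, hu⟩ := h1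
  obtain ⟨m, v, hm, hv0, hvm, hv⟩ := h2
  refine ⟨n + m, fun i => if i ≤ n then u i else v (i - n), by omega, ?_, ?_, ?_⟩
  · simp [hu0]
  · have h : ¬ (n + m ≤ n) := by omega
    simp [h, hvm]
  · intro i hi
    rcases lt_trichotomy i n with h | h | h
    · have h1' : i ≤ n := h.le
      have h2' : i + 1 ≤ n := h
      simp only [if_pos h1', if_pos h2']
      exact hu i h
    · subst h
      have h1' : ¬ (i + 1 ≤ i) := by omega
      simp only [if_pos (le_refl i), if_neg h1']
      have he : i + 1 - i = 1 := by omega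
      rw [he, hun, ← hv0]
      exact hv 0 hm
    · have h1' : ¬ (i ≤ n) := by omega
      have h2' : ¬ (i + 1 ≤ n) := by omega
      simp only [if_neg h1', if_neg h2']
      have he : i + 1 - n = (i - n) + 1 := by omega
      rw [he]
      exact hv (i - n) (by omega)

lemma chainFrom_trans {f : M → M} {δ : ℝ} {a b c : M}
    (h1 : ChainFrom f δ a b) (h2 : ChainFrom f δ b c) : ChainFrom f δ a c := by
  obtain ⟨n, u, hn, h⟩ := chainFrom_trans2 h1 h2
  exact ⟨n, u, by omega, h⟩

lemma chainLe_trans {f : M → M} {a b c : M} (h1 : ChainLe f a b) (h2 : ChainLe f b c) :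
    ChainLe f a c := fun δ hδ => chainFrom_trans (h1 δ hδ) (h2 δ hδ)

lemma chainLe_of_eq {f : M → M} {a b : M} (h : f a = b) : ChainLe f a b := by
  intro δ hδ
  refine ⟨1, fun i => if i = 0 then a else b, one_pos, by simp, by simp, ?_⟩
  intro i hi
  interval_cases i
  simp [h, hδ.le]

lemma chainLe_shiftF [CompactSpace M] {f : M → M} (hf : Continuous f) {a b : M}
    (hab : ChainLe f a b) (hbb : ChainLe f b b) : ChainLe f (f a) b := by
  intro δ hδ
  obtain ⟨δ', hδ', hmod⟩ := exists_mod hf (half_pos hδ)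
  have hηpos : 0 < min δ' (δ / 2) := lt_min hδ' (half_pos hδ)
  have hηδ' : min δ' (δ / 2) ≤ δ' := min_le_left _ _
  have hηδ : min δ' (δ / 2) ≤ δ / 2 := min_le_right _ _
  obtain ⟨n, c, hn, hc0, hcn, hc⟩ := chainFrom_trans2 (hab _ hηpos) (hbb _ hηpos)
  refine ⟨n - 1, fun i => if i = 0 then f a else c (i + 1), by omega, by simp, ?_, ?_⟩
  · have h1 : ¬ (n - 1 = 0) := by omega
    have h2 : n - 1 + 1 = n := by omega
    simp [h1, h2, hcn]
  · intro i hi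
    rcases Nat.eq_zero_or_pos i with rfl | hip
    · have h1 : ¬ (0 + 1 = 0) := by omega
      simp only [if_pos rfl, if_neg h1]
      have hd1 : dist (f a) (c 1) ≤ min δ' (δ / 2) := by
        rw [← hc0]; exact hc 0 (by omega)
      calc dist (f (f a)) (c (0 + 1 + 1))
          ≤ dist (f (f a)) (f (c 1)) + dist (f (c 1)) (c 2) := dist_triangle _ _ _
        _ ≤ δ / 2 + min δ' (δ / 2) :=
            add_le_add (hmod _ _ (hd1.trans hηδ')) (hc 1 (by omega))
        _ ≤ δ := by linarith
    · have h1 : ¬ (i = 0) := by omega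
      have h2 : ¬ (i + 1 = 0) := by omega
      simp only [if_neg h1, if_neg h2]
      exact (hc (i + 1) (by omega)).trans (by linarith)

lemma chainLe_shiftInv [CompactSpace M] (f : M ≃ₜ M) {a b : M}
    (haa : ChainLe (⇑f) a a) (hab : ChainLe (⇑f) a b) : ChainLe (⇑f) a (f.symm b) := by
  intro δ hδ
  obtain ⟨δ', hδ', hmod⟩ := exists_mod f.symm.continuous (half_pos hδ)
  have hηpos : 0 < min δ' (δ / 2) := lt_min hδ' (half_pos hδ)
  have hηδ' : min δ' (δ / 2) ≤ δ' := min_le_left _ _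
  have hηδ : min δ' (δ / 2) ≤ δ / 2 := min_le_right _ _
  obtain ⟨n, c, hn, hc0, hcn, hc⟩ := chainFrom_trans2 (haa _ hηpos) (hab _ hηpos)
  refine ⟨n - 1, fun i => if i = n - 1 then f.symm b else c i, by omega, ?_, by simp, ?_⟩
  · have h0 : ¬ ((0 : ℕ) = n - 1) := by omega
    simp [h0, hc0]
  · intro i hi
    have h1 : ¬ (i = n - 1) := by omega
    simp only [if_neg h1]
    by_cases h2 : i + 1 = n - 1
    · simp only [if_pos h2]
      have hkey : dist (c (n - 1)) (f.symm b) ≤ δ / 2 := by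
        have hcb : dist (f (c (n - 1))) b ≤ δ' := by
          have he : n - 1 + 1 = n := by omega
          have := hc (n - 1) (by omega)
          rw [he, hcn] at this
          exact this.trans hηδ'
        have := hmod _ _ hcb
        simpa using this
      calc dist (f (c i)) (f.symm b)
          ≤ dist (f (c i)) (c (i + 1)) + dist (c (i + 1)) (f.symm b) := dist_triangle _ _ _
        _ ≤ min δ' (δ / 2) + δ / 2 := by
            refine add_le_add (hc i (by omega)) ?_
            rw [h2]; exact hkey
        _ ≤ δ := by linarith
    · simp only [if_neg h2]
      exact (hc i (by omega)).trans (by linarith)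

lemma isClosed_chainClass [CompactSpace M] (f : M ≃ₜ M) (x : M) :
    IsClosed (ChainClass (⇑f) x) := by
  have h1 : IsClosed {y : M | ChainLe (⇑f) x y} := by
    refine isClosed_of_closure_subset fun y hy => ?_
    intro δ hδ
    obtain ⟨y', hy', hdy⟩ := Metric.mem_closure_iff.mp hy (δ / 2) (half_pos hδ)
    obtain ⟨n, c, hn, hc0, hcn, hc⟩ := hy' (δ / 2) (half_pos hδ)
    refine ⟨n, fun i => if i = n then y else c i, hn, ?_, by simp, ?_⟩
    · have h0 : ¬ ((0 : ℕ) = n) := by omega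
      simp [h0, hc0]
    · intro i hi
      have ha : ¬ (i = n) := by omega
      simp only [if_neg ha]
      by_cases h2 : i + 1 = n
      · simp only [if_pos h2]
        calc dist (f (c i)) y
            ≤ dist (f (c i)) (c (i + 1)) + dist (c (i + 1)) y := dist_triangle _ _ _
          _ ≤ δ / 2 + δ / 2 := by
              refine add_le_add (hc i hi) ?_
              rw [h2, hcn]
              rw [dist_comm]
              exact hdy.le
          _ = δ := by ring
      · simp only [if_neg h2]
        exact (hc i hi).trans (by linarith)
  have h2 : IsClosed {y : M | ChainLe (⇑f) y x} := by
    refine isClosed_of_closure_subset fun y hy => ?_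
    intro δ hδ
    obtain ⟨δ', hδ', hmod⟩ := exists_mod f.continuous (half_pos hδ)
    obtain ⟨y', hy', hdy⟩ := Metric.mem_closure_iff.mp hy δ' hδ'
    obtain ⟨n, c, hn, hc0, hcn, hc⟩ := hy' (δ / 2) (half_pos hδ)
    refine ⟨n, fun i => if i = 0 then y else c i, hn, by simp, ?_, ?_⟩
    · have h0 : ¬ (n = 0) := by omega
      simp [h0, hcn]
    · intro i hi
      rcases Nat.eq_zero_or_pos i with rfl | hip
      · have ha : ¬ (0 + 1 = 0) := by omega
        simp only [if_pos rfl, if_neg ha]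
        calc dist (f y) (c (0 + 1))
            ≤ dist (f y) (f y') + dist (f y') (c 1) := dist_triangle _ _ _
          _ ≤ δ / 2 + δ / 2 := by
              refine add_le_add (hmod _ _ hdy.le) ?_
              rw [← hc0]
              exact hc 0 hi
          _ = δ := by ring
      · have ha : ¬ (i = 0) := by omega
        have hb : ¬ (i + 1 = 0) := by omega
        simp only [if_neg ha, if_neg hb]
        exact (hc i hi).trans (by linarith)
  exact h1.inter h2

lemma posShadowable_of_chainLe {f : M → M} {x y : M}
    (hx : PosShadowable f x) (hxy : ChainLe f x y) : PosShadowable f y := by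
  intro ε hε
  obtain ⟨δ, hδ, hsh⟩ := hx ε hε
  refine ⟨δ, hδ, fun w hw0 hwpo => ?_⟩
  obtain ⟨n, c, hn, hc0, hcn, hc⟩ := hxy δ hδ
  set u : ℕ → M := fun i => if i < n then c i else w (i - n) with hu
  have hu0 : u 0 = x := by simp [hu, hn, hc0]
  have hupo : IsPO f δ u := by
    intro i
    by_cases h1 : i + 1 < n
    · have h2 : i < n := by omega
      simp only [hu, if_pos h1, if_pos h2]
      exact hc i h2
    · by_cases h2 : i < n
      · have h3 : i + 1 = n := by omega
        simp only [hu, if_pos h2, if_neg h1]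
        have he : i + 1 - n = 0 := by omega
        rw [he, hw0, ← hcn, ← h3]
        exact hc i h2
      · simp only [hu, if_neg h1, if_neg h2]
        have he : i + 1 - n = i - n + 1 := by omega
        rw [he]
        exact hwpo (i - n)
  obtain ⟨z, hz⟩ := hsh u hu0 hupo
  refine ⟨f^[n] z, fun i => ?_⟩
  have h1 : ¬ (n + i < n) := by omega
  have h2 := hz (n + i)
  rw [show f^[n + i] z = f^[i] (f^[n] z) by rw [Nat.add_comm, Function.iterate_add_apply]] at h2
  simpa [hu, h1, Nat.add_sub_cancel_left] using h2

lemma exists_chainRec_mem [CompactSpace M] (f : M ≃ₜ M) {K : Set M} (hne : K.Nonempty)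
    (hcl : IsClosed K) (hinv : (⇑f) '' K = K) :
    ∃ p ∈ K, ChainRec (⇑f) p := by
  obtain ⟨x0, hx0⟩ := hne
  have hmem : ∀ n, f^[n] x0 ∈ K := by
    intro n
    induction n with
    | zero => exact hx0
    | succ n ih =>
      rw [Function.iterate_succ_apply', ← hinv]
      exact ⟨_, ih, rfl⟩
  obtain ⟨p, hpK, φ, hφ, hlim⟩ := hcl.isCompact.tendsto_subseq hmem
  refine ⟨p, hpK, ?_⟩
  intro δ hδ
  obtain ⟨δ', hδ', hmod⟩ := exists_mod f.continuous (half_pos hδ)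
  have hηpos : 0 < min δ' (δ / 2) := lt_min hδ' (half_pos hδ)
  have hηδ' : min δ' (δ / 2) ≤ δ' := min_le_left _ _
  have hηδ : min δ' (δ / 2) ≤ δ / 2 := min_le_right _ _
  obtain ⟨N, hN⟩ := (Metric.tendsto_atTop.mp hlim) _ hηpos
  set a := φ N with hadef
  set b := φ (N + 1) with hbdef
  have hab : a < b := hφ (Nat.lt_succ_self N)
  have hda : dist (f^[a] x0) p < min δ' (δ / 2) := by
    have := hN N le_rfl
    simpa using this
  have hdb : dist (f^[b] x0) p < min δ' (δ / 2) := by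
    have := hN (N + 1) (Nat.le_succ N)
    simpa using this
  set m := b - a with hm
  have hm1 : 1 ≤ m := by omega
  refine ⟨m, fun i => if i = 0 ∨ i = m then p else f^[a + i] x0, by omega,
    by simp, by simp, ?_⟩
  intro i hi
  beta_reduce
  rcases Nat.eq_zero_or_pos i with rfl | hip
  · rw [if_pos (show (0:ℕ) = 0 ∨ 0 = m from Or.inl rfl)]
    have hfp : dist (f p) (f (f^[a] x0)) ≤ δ / 2 := by
      refine hmod _ _ ?_
      rw [dist_comm]
      exact hda.le.trans hηδ'
    by_cases h1 : (0 : ℕ) + 1 = m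
    · have h1' : (0 : ℕ) + 1 = 0 ∨ (0 : ℕ) + 1 = m := Or.inr h1
      simp only [if_pos h1']
      have hb1 : a + 1 = b := by omega
      have hfs : f (f^[a] x0) = f^[b] x0 := by
        rw [← hb1]; exact (Function.iterate_succ_apply' f a x0).symm
      calc dist (f p) p ≤ dist (f p) (f (f^[a] x0)) + dist (f (f^[a] x0)) p :=
            dist_triangle _ _ _
        _ ≤ δ / 2 + δ / 2 := add_le_add hfp (by rw [hfs]; exact hdb.le.trans hηδ)
        _ = δ := by ring
    · have h1' : ¬ ((0 : ℕ) + 1 = 0 ∨ (0 : ℕ) + 1 = m) := by omega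
      simp only [if_neg h1']
      have hfs : f^[a + (0 + 1)] x0 = f (f^[a] x0) := Function.iterate_succ_apply' f a x0
      rw [hfs]
      linarith
  · have h1 : ¬ (i = 0 ∨ i = m) := by omega
    simp only [if_neg h1]
    have hfs : f (f^[a + i] x0) = f^[a + i + 1] x0 := (Function.iterate_succ_apply' f _ x0).symm
    by_cases h2 : i + 1 = m
    · rw [if_pos (Or.inr h2 : i + 1 = 0 ∨ i + 1 = m)]
      have h3 : a + i + 1 = b := by omega
      rw [hfs, h3]
      exact hdb.le.trans (hηδ.trans (by linarith))
    · have h2' : ¬ (i + 1 = 0 ∨ i + 1 = m) := by omega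
      simp only [if_neg h2']
      rw [hfs, show a + (i + 1) = a + i + 1 by omega]
      simp [hδ.le]

end Aux


/-- `Sh⁺(f)` contains a nonempty closed `f`-invariant subset iff it
meets the chain-recurrent set. -/
theorem shPlus_closed_invariant_iff {M : Type*} [MetricSpace M] [CompactSpace M]
    (f : M ≃ₜ M) :
    (∃ K : Set M, K.Nonempty ∧ IsClosed K ∧ (⇑f) '' K = K ∧
        ∀ y ∈ K, PosShadowable (⇑f) y) ↔
      ∃ x : M, PosShadowable (⇑f) x ∧ ChainRec (⇑f) x := by
  constructor
  · rintro ⟨K, hne, hcl, hinv, hsh⟩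
    obtain ⟨p, hpK, hcr⟩ := exists_chainRec_mem f hne hcl hinv
    exact ⟨p, hsh p hpK, hcr⟩
  · rintro ⟨x, hx, hcr⟩
    refine ⟨ChainClass (⇑f) x, ⟨x, hcr, hcr⟩, isClosed_chainClass f x, ?_, ?_⟩
    · ext z
      constructor
      · rintro ⟨w, ⟨hw1, hw2⟩, rfl⟩
        exact ⟨chainLe_trans hw1 (chainLe_of_eq rfl),
               chainLe_shiftF f.continuous hw2 hcr⟩
      · rintro ⟨hz1, hz2⟩
        refine ⟨f.symm z, ⟨?_, ?_⟩, f.apply_symm_apply z⟩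
        · exact chainLe_shiftInv f hcr hz1
        · exact chainLe_trans (chainLe_of_eq (f.apply_symm_apply z)) hz2
    · intro y hy
      exact posShadowable_of_chainLe hx hy.1
end

section
/- Let f: M → M be a homeomorphism of a compact metric space. If x is a positively shadowable chain-recurrent point, then the chain-recurrence class H(x) has the two-sided shadowing property: for every ε > 0 there is δ > 0 such that every two-sided δ-pseudo-orbit (x_i)_{i∈ℤ} contained in H(x) is ε-shadowed by some point z ∈ M (with d(f^i(z), x_i) ≤ ε for all i ∈ ℤ). -/
open Function Metric

lemma zIter_add_apply {M : Type*} [TopologicalSpace M] (f : M ≃ₜ M) (a b : ℤ) (p : M) :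
    zIter f (a + b) p = zIter f a (zIter f b p) := by
  simp [zIter, zpow_add, Equiv.Perm.mul_apply]

lemma zIter_natCast_apply {M : Type*} [TopologicalSpace M] (f : M ≃ₜ M) (n : ℕ) (p : M) :
    zIter f (n : ℤ) p = (⇑f)^[n] p := by
  have : (⇑f)^[n] = ⇑(f.toEquiv ^ n) := Equiv.Perm.iterate_eq_pow f.toEquiv n
  simp [zIter, zpow_natCast, this]

lemma zIter_cont {M : Type*} [TopologicalSpace M] (f : M ≃ₜ M) (i : ℤ) :
    Continuous (zIter f i) := by
  rcases i.eq_nat_or_neg with ⟨n, rfl | rfl⟩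
  · have : zIter f (n : ℤ) = (⇑f)^[n] := funext fun p => zIter_natCast_apply f n p
    rw [this]; exact f.continuous.iterate n
  · have : zIter f (-(n : ℤ)) = (⇑f.symm)^[n] := by
      funext p
      have h1 : f.toEquiv ^ (-(n:ℤ)) = (f.toEquiv⁻¹) ^ n := by
        rw [zpow_neg, zpow_natCast, inv_pow]
      have h2 : (⇑f.symm)^[n] = ⇑(f.symm.toEquiv ^ n) := Equiv.Perm.iterate_eq_pow _ n
      have h3 : f.toEquiv⁻¹ = f.symm.toEquiv := rfl
      simp [zIter, h1, h3, h2]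
    rw [this]; exact f.symm.continuous.iterate n

/-- if `x` is a positively shadowable chain-recurrent point, then the
chain-recurrence class `H(x)` has the two-sided shadowing property. -/
theorem chainClass_twoSided_shadowing {M : Type*} [MetricSpace M] [CompactSpace M]
    (f : M ≃ₜ M) (x : M) (h1 : PosShadowable (⇑f) x) (h2 : ChainRec (⇑f) x) :
    ∀ ε > 0, ∃ δ > 0, ∀ y : ℤ → M, (∀ i : ℤ, y i ∈ ChainClass (⇑f) x) →
      IsPOZ (⇑f) δ y → ∃ z : M, ∀ i : ℤ, dist (zIter f i z) (y i) ≤ ε := by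
  intro ε hε
  obtain ⟨δ, hδ, hsh⟩ := h1 ε hε
  refine ⟨δ, hδ, ?_⟩
  intro y hy hpo
  -- For each `n`, find a point whose `zIter` orbit ε-shadows `y` on `[-n, ∞)`.
  have key : ∀ n : ℕ, ∃ w : M, ∀ i : ℤ, -(n : ℤ) ≤ i → dist (zIter f i w) (y i) ≤ ε := by
    intro n
    obtain ⟨k, c, hk, hc0, hck, hchain⟩ := (hy (-(n : ℤ))).1 δ hδ
    set seq : ℕ → M := fun i => if i < k then c i else y (-(n : ℤ) + (i - k : ℕ)) with hseq
    have hseq0 : seq 0 = x := by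
      simp only [hseq]; rw [if_pos hk]; exact hc0
    have hseqk : ∀ j : ℕ, seq (k + j) = y (-(n : ℤ) + j) := by
      intro j
      simp only [hseq]
      rw [if_neg (by omega)]
      congr 2
      omega
    have hpo1 : IsPO (⇑f) δ seq := by
      intro i
      by_cases h : i < k
      · have hsi : seq i = c i := if_pos h
        by_cases h' : i + 1 < k
        · have hsi1 : seq (i + 1) = c (i + 1) := if_pos h'
          rw [hsi, hsi1]; exact hchain i h
        · have hik : i + 1 = k := by omega
          have hsi1 : seq (i + 1) = c (i + 1) := by
            simp only [hseq]
            rw [if_neg h', hik]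
            simp [Nat.sub_self, hck]
          rw [hsi, hsi1]; exact hchain i h
      · have hsi : seq i = y (-(n : ℤ) + (i - k : ℕ)) := if_neg h
        have hsi1 : seq (i + 1) = y (-(n : ℤ) + ((i + 1 - k : ℕ) : ℤ)) := if_neg (by omega)
        rw [hsi, hsi1]
        have hcast : ((i + 1 - k : ℕ) : ℤ) = ((i - k : ℕ) : ℤ) + 1 := by omega
        rw [hcast, ← add_assoc]
        exact hpo _
    obtain ⟨z, hz⟩ := hsh seq hseq0 hpo1
    refine ⟨(⇑f)^[k + n] z, ?_⟩
    intro i hi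
    set j : ℕ := (i + n).toNat with hjdef
    have hj : (j : ℤ) = i + n := Int.toNat_of_nonneg (by omega)
    have h1' : zIter f i ((⇑f)^[k + n] z) = (⇑f)^[k + j] z := by
      rw [← zIter_natCast_apply f (k + n) z, ← zIter_add_apply]
      have : i + ((k + n : ℕ) : ℤ) = ((k + j : ℕ) : ℤ) := by push_cast; omega
      rw [this, zIter_natCast_apply]
    have h2' : y i = y (-(n : ℤ) + j) := by congr 1; omega
    rw [h1', h2']
    have := hz (k + j)
    rwa [hseqk j] at this
  choose w hw using key
  obtain ⟨z, -, φ, hφ, hlim⟩ := isCompact_univ.tendsto_subseq (fun n => Set.mem_univ (w n))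
  refine ⟨z, fun i => ?_⟩
  have hz : Filter.Tendsto (fun m => zIter f i (w (φ m))) Filter.atTop (nhds (zIter f i z)) :=
    ((zIter_cont f i).tendsto z).comp hlim
  have hdist : Filter.Tendsto (fun m => dist (zIter f i (w (φ m))) (y i)) Filter.atTop
      (nhds (dist (zIter f i z) (y i))) := hz.dist tendsto_const_nhds
  refine le_of_tendsto hdist ?_
  filter_upwards [Filter.eventually_ge_atTop (-i).toNat] with m hm
  have hle : m ≤ φ m := hφ.le_apply
  exact hw (φ m) i (by omega)
end

section
/- Let f: M → M be a homeomorphism of a compact metric space and μ a positively shadowable Borel probability measure. Then every point of the support of μ is positively shadowable, i.e., Supp(μ) ⊂ Sh⁺(f). -/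
open Function Metric

open MeasureTheory

/-- A Borel probability measure is positively shadowable: for every `ε > 0` there are a
full-measure set `B` and `δ > 0` such that every one-sided `δ`-pseudo-orbit starting
in `B` is `ε`-shadowed. -/
def PosShadowableMeasure {M : Type*} [MetricSpace M] [MeasurableSpace M]
    (f : M → M) (μ : Measure M) : Prop :=
  ∀ ε > 0, ∃ (B : Set M) (δ : ℝ), 0 < δ ∧ μ B = 1 ∧
    ∀ y : ℕ → M, y 0 ∈ B → IsPO f δ y → IsShadowed f ε y

/-- every point of the support of a positively shadowable probability
measure is positively shadowable. -/
theorem support_posShadowable {M : Type*} [MetricSpace M] [CompactSpace M]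
    [MeasurableSpace M] [BorelSpace M] (f : M ≃ₜ M) (μ : Measure M)
    [IsProbabilityMeasure μ] (hμ : PosShadowableMeasure (⇑f) μ) :
    ∀ p : M, (∀ r > 0, 0 < μ (ball p r)) → PosShadowable (⇑f) p := by
  intro p hp ε hε
  obtain ⟨B, δ, hδ, hB1, hsh⟩ := hμ (ε / 2) (by linarith)
  obtain ⟨η, hη, hηf⟩ := Metric.uniformContinuous_iff.mp
    (CompactSpace.uniformContinuous_of_continuous f.continuous) (δ / 2) (by linarith)
  refine ⟨δ / 2, by linarith, ?_⟩
  intro y hy0 hPO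
  set r := min η (ε / 2) with hr
  have hrpos : 0 < r := lt_min hη (by linarith)
  -- find b ∈ B ∩ ball p r
  have hball : 0 < μ (ball p r) := hp r hrpos
  have hne : (B ∩ ball p r).Nonempty := by
    by_contra h
    rw [Set.not_nonempty_iff_eq_empty] at h
    have hsub : B ⊆ (ball p r)ᶜ := by
      intro x hx
      intro hxball
      exact Set.eq_empty_iff_forall_notMem.mp h x ⟨hx, hxball⟩
    have h1 : μ B ≤ μ (ball p r)ᶜ := measure_mono hsub
    have h2 : μ (ball p r)ᶜ = 1 - μ (ball p r) := by
      rw [measure_compl measurableSet_ball (measure_ne_top μ _), measure_univ]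
    have h3 : (1 : ENNReal) - μ (ball p r) < 1 :=
      ENNReal.sub_lt_self ENNReal.one_ne_top one_ne_zero hball.ne'
    rw [hB1, h2] at h1
    exact absurd h1 (not_le.mpr h3)
  obtain ⟨b, hbB, hbball⟩ := hne
  have hbp : dist b p < r := mem_ball.mp hbball
  -- modified pseudo-orbit
  set y' : ℕ → M := fun i => if i = 0 then b else y i with hy'
  have hy'0 : y' 0 = b := rfl
  have hPO' : IsPO (⇑f) δ y' := by
    intro i
    cases i with
    | zero =>
      have h1 : dist (f b) (f p) < δ / 2 := hηf (lt_of_lt_of_le hbp (min_le_left _ _))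
      have h2 : dist (f p) (y 1) ≤ δ / 2 := by
        have := hPO 0; rwa [hy0] at this
      have : y' 1 = y 1 := by simp [hy']
      calc dist (f (y' 0)) (y' (0 + 1)) = dist (f b) (y 1) := by rw [hy'0, this]
        _ ≤ dist (f b) (f p) + dist (f p) (y 1) := dist_triangle _ _ _
        _ ≤ δ := by linarith
    | succ n =>
      have h1 : y' (n + 1) = y (n + 1) := by simp [hy']
      have h2 : y' (n + 1 + 1) = y (n + 1 + 1) := by simp [hy']
      rw [h1, h2]
      linarith [hPO (n + 1)]
  obtain ⟨z, hz⟩ := hsh y' (hy'0 ▸ hbB) hPO'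
  refine ⟨z, ?_⟩
  intro i
  cases i with
  | zero =>
    have h1 : dist z b ≤ ε / 2 := by simpa [hy'0] using hz 0
    have h2 : dist b p ≤ ε / 2 := le_of_lt (lt_of_lt_of_le hbp (min_le_right _ _))
    calc dist (f^[0] z) (y 0) = dist z p := by rw [hy0]; simp
      _ ≤ dist z b + dist b p := dist_triangle _ _ _
      _ ≤ ε := by linarith
  | succ n =>
    have h1 : y' (n + 1) = y (n + 1) := by simp [hy']
    have := hz (n + 1)
    rw [h1] at this
    linarith
end

section
/- Let f: M → M be a homeomorphism of a compact metric space. Then f admits an f-invariant positively shadowable Borel probability measure if and only if there exists a point that is both positively shadowable and chain-recurrent (Sh⁺(f) ∩ CR(f) ≠ ∅). -/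
open Function Metric

open MeasureTheory

set_option linter.unusedSectionVars false

open Filter Topology TopologicalSpace ENNReal

namespace ShadowAux

variable {M : Type*} [MetricSpace M]

theorem shadow_of_chainFrom {f : M → M} {x : M} {δ ε : ℝ}
    (hx : ∀ p : ℕ → M, p 0 = x → IsPO f δ p → IsShadowed f ε p)
    {y : M} (hc : ChainFrom f δ x y) (p : ℕ → M) (hp0 : p 0 = y) (hpo : IsPO f δ p) :
    IsShadowed f ε p := by
  obtain ⟨n, c, hn, hc0, hcn, hlink⟩ := hc
  set q : ℕ → M := fun i => if i < n then c i else p (i - n) with hq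
  have hq0 : q 0 = x := by simp [hq, hn, hc0]
  have hqpo : IsPO f δ q := by
    intro i
    rcases lt_trichotomy (i + 1) n with h | h | h
    · have hi : i < n := by omega
      simpa [hq, hi, h] using hlink i hi
    · have hi : i < n := by omega
      have h1 : q (i + 1) = c (i + 1) := by
        have h2 : q (i + 1) = p 0 := by simp [hq, h]
        rw [h2, hp0, ← hcn, ← h]
      have h2 : q i = c i := by simp [hq, hi]
      rw [h1, h2]; exact hlink i hi
    · have hi : ¬ i < n := by omega
      have hi1 : ¬ i + 1 < n := by omega
      have h1 : q i = p (i - n) := by simp [hq, hi]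
      have h2 : q (i + 1) = p (i - n + 1) := by
        have h3 : i + 1 - n = i - n + 1 := by omega
        simp [hq, hi1, h3]
      rw [h1, h2]; exact hpo (i - n)
  obtain ⟨z, hz⟩ := hx q hq0 hqpo
  refine ⟨f^[n] z, fun i => ?_⟩
  have h3 := hz (i + n)
  have h4 : q (i + n) = p i := by
    have h5 : ¬ i + n < n := by omega
    have h6 : i + n - n = i := by omega
    simp [hq, h5, h6]
  rwa [Function.iterate_add_apply, h4] at h3

theorem isClosed_setOf_chainLe (f : M → M) (x : M) : IsClosed {y | ChainLe f x y} := by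
  rw [← closure_subset_iff_isClosed]
  intro y hy δ hδ
  obtain ⟨y', hy', hdy⟩ := Metric.mem_closure_iff.1 hy (δ/2) (by linarith)
  obtain ⟨n, c, hn, h0, hn', hl⟩ := hy' (δ/2) (by linarith)
  refine ⟨n, fun i => if i = n then y else c i, hn,
    by show (if (0:ℕ) = n then y else c 0) = x; rw [if_neg (by omega), h0], by simp, ?_⟩
  intro i hi
  show dist (f (if i = n then y else c i)) (if i + 1 = n then y else c (i + 1)) ≤ δ
  rw [if_neg (by omega : ¬ i = n)]
  by_cases h : i + 1 = n
  · have h1 : dist (f (c i)) (c n) ≤ δ/2 := by rw [← h]; exact hl i hi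
    rw [if_pos h]
    calc dist (f (c i)) y ≤ dist (f (c i)) (c n) + dist (c n) y := dist_triangle _ _ _
      _ ≤ δ/2 + δ/2 := add_le_add h1 (by rw [hn', dist_comm]; exact le_of_lt hdy)
      _ = δ := by ring
  · rw [if_neg h]
    exact (hl i hi).trans (by linarith)

theorem chainLe_map {f : M → M} {x y : M} (h : ChainLe f x y) : ChainLe f x (f y) := by
  intro δ hδ
  obtain ⟨n, c, hn, h0, hn', hl⟩ := h δ hδ
  refine ⟨n + 1, fun i => if i < n + 1 then c i else f y, by omega,
    by show (if (0:ℕ) < n + 1 then c 0 else f y) = x; rw [if_pos (by omega)]; exact h0,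
    by simp, ?_⟩
  intro i hi
  show dist (f (if i < n + 1 then c i else f y)) (if i + 1 < n + 1 then c i.succ else f y) ≤ δ
  by_cases h2 : i + 1 < n + 1
  · rw [if_pos (by omega : i < n + 1), if_pos h2]; exact hl i (by omega)
  · have h3 : i = n := by omega
    rw [if_pos (by omega : i < n + 1), if_neg h2, h3, hn']
    simp [hδ.le]

theorem chainLe_iterate {f : M → M} {x : M} (h : ChainRec f x) : ∀ k, ChainLe f x (f^[k] x)
  | 0 => h
  | (k+1) => by rw [Function.iterate_succ_apply']; exact chainLe_map (chainLe_iterate h k)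

theorem shadow_closure {f : M → M} (hf : Continuous f) {B : Set M} {δ e : ℝ} (hδ : 0 < δ)
    (hsh : ∀ p : ℕ → M, p 0 ∈ B → IsPO f δ p → IsShadowed f e p)
    {y : M} (hy : y ∈ closure B) (he : 0 < e) :
    ∀ p : ℕ → M, p 0 = y → IsPO f (δ/2) p → IsShadowed f (e + e) p := by
  intro p hp0 hpo
  obtain ⟨r, hr, hball⟩ := Metric.continuousAt_iff.1 hf.continuousAt (δ/2) (by linarith)
  obtain ⟨b, hbB, hby⟩ := Metric.mem_closure_iff.1 hy (min r e) (lt_min hr he)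
  set p' : ℕ → M := fun i => if i = 0 then b else p i with hp'
  have h0 : p' 0 = b := by simp [hp']
  have hpo' : IsPO f δ p' := by
    intro i
    rcases Nat.eq_zero_or_pos i with h | h
    · subst h
      have h1 : p' 1 = p 1 := by simp [hp']
      rw [h0, h1]
      have hb : dist b y < r := by rw [dist_comm]; exact lt_of_lt_of_le hby (min_le_left _ _)
      calc dist (f b) (p 1) ≤ dist (f b) (f y) + dist (f y) (p 1) := dist_triangle _ _ _
        _ ≤ δ/2 + δ/2 := by
            refine add_le_add (le_of_lt (hball hb)) ?_
            have h2 := hpo 0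
            rwa [hp0] at h2
        _ = δ := by ring
    · have h1 : p' i = p i := by simp [hp', h.ne']
      have h2 : p' (i+1) = p (i+1) := by simp [hp']
      rw [h1, h2]; exact (hpo i).trans (by linarith)
  obtain ⟨z, hz⟩ := hsh p' (h0 ▸ hbB) hpo'
  refine ⟨z, fun i => ?_⟩
  rcases Nat.eq_zero_or_pos i with h | h
  · subst h
    have h3 := hz 0
    rw [h0] at h3
    simp only [Function.iterate_zero_apply] at h3 ⊢
    rw [hp0]
    calc dist z y ≤ dist z b + dist b y := dist_triangle _ _ _
      _ ≤ e + e := add_le_add h3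
          (by rw [dist_comm]; exact le_of_lt (lt_of_lt_of_le hby (min_le_right _ _)))
  · have h3 := hz i
    rw [show p' i = p i from by simp [hp', h.ne']] at h3
    exact h3.trans (by linarith)


open MeasureTheory Filter Topology TopologicalSpace ENNReal


noncomputable def natU : Ultrafilter ℕ := Ultrafilter.of Filter.atTop

theorem natU_le_atTop : (natU : Filter ℕ) ≤ Filter.atTop := Ultrafilter.of_le _

variable {M : Type*} [MetricSpace M] [CompactSpace M]

open scoped Classical in
noncomputable def cnt (f : M → M) (x : M) (n : ℕ) (K : Set M) : ℕ :=
  ((Finset.range n).filter fun k => f^[k] x ∈ K).card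

noncomputable def avg (f : M → M) (x : M) (K : Set M) (n : ℕ) : ℝ≥0∞ := cnt f x n K / n

noncomputable def lam (f : M → M) (x : M) (K : Set M) : ℝ≥0∞ := limUnder natU (avg f x K)

theorem tendsto_avg (f : M → M) (x : M) (K : Set M) :
    Tendsto (avg f x K) natU (𝓝 (lam f x K)) := by
  obtain ⟨z, -, hz⟩ := isCompact_univ.ultrafilter_le_nhds (natU.map (avg f x K))
    (by simp [Filter.principal_univ])
  have hz' : Tendsto (avg f x K) natU (𝓝 z) := by
    rwa [Filter.Tendsto, ← Ultrafilter.coe_map]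
  rw [lam, hz'.limUnder_eq]
  exact hz'

theorem cnt_le (f : M → M) (x : M) (n : ℕ) (K : Set M) : cnt f x n K ≤ n := by
  classical
  exact (Finset.card_filter_le _ _).trans_eq (Finset.card_range n)

theorem cnt_mono (f : M → M) (x : M) (n : ℕ) {K K' : Set M} (h : K ⊆ K') :
    cnt f x n K ≤ cnt f x n K' := by
  classical
  exact Finset.card_le_card (Finset.monotone_filter_right _ (fun k _ hk => h hk))

theorem cnt_union_le (f : M → M) (x : M) (n : ℕ) (K K' : Set M) :
    cnt f x n (K ∪ K') ≤ cnt f x n K + cnt f x n K' := by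
  classical
  simp only [cnt, Set.mem_union, Finset.filter_or]
  exact Finset.card_union_le _ _

theorem cnt_union_disjoint (f : M → M) (x : M) (n : ℕ) {K K' : Set M} (h : Disjoint K K') :
    cnt f x n (K ∪ K') = cnt f x n K + cnt f x n K' := by
  classical
  simp only [cnt, Set.mem_union, Finset.filter_or]
  rw [Finset.card_union_of_disjoint]
  refine Finset.disjoint_left.2 fun k hk hk' => ?_
  exact Set.disjoint_left.1 h (Finset.mem_filter.1 hk).2 (Finset.mem_filter.1 hk').2

theorem cnt_succ_le (f : M → M) (x : M) (n : ℕ) (K : Set M) :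
    cnt f x (n + 1) K ≤ cnt f x n K + 1 := by
  classical
  simp only [cnt, Finset.range_add_one, Finset.filter_insert]
  split
  · exact Finset.card_insert_le _ _
  · omega

theorem cnt_le_image (f : M → M) (x : M) (n : ℕ) (K : Set M) :
    cnt f x n K ≤ cnt f x n (f '' K) + 1 := by
  classical
  have h1 : cnt f x n K ≤ cnt f x (n + 1) (f '' K) := by
    refine Finset.card_le_card_of_injOn (fun k => k + 1) (fun k hk => ?_) (fun a _ b _ h => by have h' : a + 1 = b + 1 := h; omega)
    simp only [Finset.mem_coe, Finset.mem_filter, Finset.mem_range] at hk ⊢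
    exact ⟨by omega, ⟨f^[k] x, hk.2, (Function.iterate_succ_apply' f k x).symm⟩⟩
  exact h1.trans (cnt_succ_le f x n (f '' K))

theorem cnt_image_le {f : M → M} (hf : Injective f) (x : M) (n : ℕ) (K : Set M) :
    cnt f x n (f '' K) ≤ cnt f x n K + 1 := by
  classical
  set T := (Finset.range n).filter (fun k => f^[k] x ∈ f '' K) with hT
  have h1 : T.card ≤ (T.erase 0).card + 1 := by
    by_cases h0 : (0 : ℕ) ∈ T
    · have hc := Finset.card_pos.mpr ⟨0, h0⟩
      rw [Finset.card_erase_of_mem h0]; omega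
    · rw [Finset.erase_eq_of_notMem h0]; omega
  have h2 : (T.erase 0).card ≤ cnt f x n K := by
    refine Finset.card_le_card_of_injOn (fun k => k - 1) (fun k hk => ?_) ?_
    · obtain ⟨hk0, hk'⟩ := Finset.mem_erase.1 hk
      rw [hT, Finset.mem_filter, Finset.mem_range] at hk'
      obtain ⟨hkn, w, hw, hfw⟩ := hk'
      have hk1 : k - 1 + 1 = k := by omega
      have h5 : f (f^[k-1] x) = f w := by
        rw [hfw]
        conv_rhs => rw [← hk1]
        rw [Function.iterate_succ_apply']
      have h6 : f^[k-1] x = w := hf h5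
      simp only [cnt, Finset.mem_coe, Finset.mem_filter, Finset.mem_range]
      exact ⟨by omega, h6 ▸ hw⟩
    · intro a ha b hb h
      have ha0 := (Finset.mem_erase.1 ha).1
      have hb0 := (Finset.mem_erase.1 hb).1
      have h' : a - 1 = b - 1 := h
      omega
  calc cnt f x n (f '' K) = T.card := rfl
    _ ≤ (T.erase 0).card + 1 := h1
    _ ≤ cnt f x n K + 1 := by omega

theorem avg_le_one (f : M → M) (x : M) (K : Set M) (n : ℕ) : avg f x K n ≤ 1 := by
  rcases Nat.eq_zero_or_pos n with h | h
  · simp [avg, h, cnt]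
  · rw [avg]
    calc (cnt f x n K : ℝ≥0∞) / n ≤ (n : ℝ≥0∞) / n := by
          gcongr
          exact_mod_cast cnt_le f x n K
      _ ≤ 1 := by
          rw [ENNReal.div_self (by exact_mod_cast h.ne') (by simp)]

theorem lam_le_one (f : M → M) (x : M) (K : Set M) : lam f x K ≤ 1 :=
  le_of_tendsto (tendsto_avg f x K) (Eventually.of_forall fun n => avg_le_one f x K n)

theorem lam_ne_top (f : M → M) (x : M) (K : Set M) : lam f x K ≠ ⊤ :=
  ((lam_le_one f x K).trans_lt ENNReal.one_lt_top).ne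

theorem lam_mono (f : M → M) (x : M) {K K' : Set M} (h : K ⊆ K') :
    lam f x K ≤ lam f x K' := by
  refine le_of_tendsto_of_tendsto' (tendsto_avg f x K) (tendsto_avg f x K') fun n => ?_
  rw [avg, avg]
  gcongr
  exact_mod_cast cnt_mono f x n h

theorem lam_union (f : M → M) (x : M) {K K' : Set M} (h : Disjoint K K') :
    lam f x (K ∪ K') = lam f x K + lam f x K' := by
  have h1 : Tendsto (avg f x (K ∪ K')) natU (𝓝 (lam f x K + lam f x K')) := by
    refine ((tendsto_avg f x K).add (tendsto_avg f x K')).congr fun n => ?_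
    rw [avg, avg, avg, ENNReal.div_add_div_same, ← Nat.cast_add, ← cnt_union_disjoint f x n h]
  exact tendsto_nhds_unique (tendsto_avg f x (K ∪ K')) h1

theorem lam_union_le (f : M → M) (x : M) (K K' : Set M) :
    lam f x (K ∪ K') ≤ lam f x K + lam f x K' := by
  refine le_of_tendsto_of_tendsto' (tendsto_avg f x (K ∪ K'))
    ((tendsto_avg f x K).add (tendsto_avg f x K')) fun n => ?_
  rw [avg, avg, avg, ENNReal.div_add_div_same]
  gcongr
  exact_mod_cast cnt_union_le f x n K K'

theorem lam_le_of_cnt_le (f : M → M) (x : M) {K K' : Set M}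
    (h : ∀ n, cnt f x n K ≤ cnt f x n K' + 1) : lam f x K ≤ lam f x K' := by
  have h2 : Tendsto (fun n => avg f x K' n + (n : ℝ≥0∞)⁻¹) natU (𝓝 (lam f x K' + 0)) :=
    (tendsto_avg f x K').add (ENNReal.tendsto_inv_nat_nhds_zero.mono_left natU_le_atTop)
  rw [← add_zero (lam f x K')]
  refine le_of_tendsto_of_tendsto' (tendsto_avg f x K) h2 fun n => ?_
  rw [avg, avg]
  calc (cnt f x n K : ℝ≥0∞) / n ≤ ((cnt f x n K' + 1 : ℕ) : ℝ≥0∞) / n := by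
        gcongr
        exact_mod_cast h n
    _ = (cnt f x n K' : ℝ≥0∞) / n + (n : ℝ≥0∞)⁻¹ := by
        push_cast
        rw [ENNReal.add_div, one_div]

theorem lam_image {f : M → M} (hf : Injective f) (x : M) (K : Set M) :
    lam f x (f '' K) = lam f x K :=
  le_antisymm (lam_le_of_cnt_le f x fun n => cnt_image_le hf x n K)
    (lam_le_of_cnt_le f x fun n => cnt_le_image f x n K)

theorem lam_univ (f : M → M) (x : M) : lam f x Set.univ = 1 := by
  have h1 : Tendsto (avg f x Set.univ) natU (𝓝 1) := by
    refine Tendsto.mono_left ?_ natU_le_atTop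
    have h2 : ∀ n : ℕ, 1 ≤ n → avg f x Set.univ n = 1 := by
      intro n hn
      have h3 : cnt f x n Set.univ = n := by
        classical
        simp [cnt]
      rw [avg, h3, ENNReal.div_self (by exact_mod_cast Nat.one_le_iff_ne_zero.1 hn) (by simp)]
    exact Tendsto.congr' (eventuallyEq_of_mem (eventually_ge_atTop 1) fun n hn => (h2 n hn).symm)
      tendsto_const_nhds
  exact tendsto_nhds_unique (tendsto_avg f x Set.univ) h1

theorem lam_zero (f : M → M) (x : M) {K : Set M} (h : ∀ k, f^[k] x ∉ K) :
    lam f x K = 0 := by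
  have h1 : Tendsto (avg f x K) natU (𝓝 0) := by
    have h2 : ∀ n, avg f x K n = 0 := by
      intro n
      have h3 : cnt f x n K = 0 := by
        classical
        simp only [cnt, Finset.card_eq_zero, Finset.filter_eq_empty_iff]
        exact fun k _ => h k
      simp [avg, h3]
    exact Tendsto.congr (fun n => (h2 n).symm) tendsto_const_nhds
  exact tendsto_nhds_unique (tendsto_avg f x K) h1

variable [MeasurableSpace M] [BorelSpace M]

noncomputable def orbContent (f : M → M) (x : M) : Content M where
  toFun K := (lam f x K).toNNReal
  mono' K₁ K₂ h := ENNReal.toNNReal_mono (lam_ne_top f x K₂) (lam_mono f x h)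
  sup_disjoint' K₁ K₂ h _ _ := by
    show (lam f x ((K₁ ⊔ K₂ : Compacts M) : Set M)).toNNReal =
      (lam f x (K₁ : Set M)).toNNReal + (lam f x (K₂ : Set M)).toNNReal
    rw [show ((K₁ ⊔ K₂ : Compacts M) : Set M) = (K₁ : Set M) ∪ K₂ from rfl, lam_union f x h,
      ENNReal.toNNReal_add (lam_ne_top f x _) (lam_ne_top f x _)]
  sup_le' K₁ K₂ := by
    show (lam f x ((K₁ ⊔ K₂ : Compacts M) : Set M)).toNNReal ≤
      (lam f x (K₁ : Set M)).toNNReal + (lam f x (K₂ : Set M)).toNNReal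
    rw [show ((K₁ ⊔ K₂ : Compacts M) : Set M) = (K₁ : Set M) ∪ K₂ from rfl]
    have h2 := lam_union_le f x (K₁ : Set M) K₂
    rw [← ENNReal.toNNReal_add (lam_ne_top f x _) (lam_ne_top f x _)]
    exact ENNReal.toNNReal_mono (by
      exact ENNReal.add_ne_top.2 ⟨lam_ne_top f x _, lam_ne_top f x _⟩) h2

theorem orbContent_apply (f : M → M) (x : M) (K : Compacts M) :
    (orbContent f x) K = lam f x (K : Set M) := by
  show ((orbContent f x).toFun K : ℝ≥0∞) = _
  exact ENNReal.coe_toNNReal (lam_ne_top f x _)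

noncomputable def orbMeasure (f : M → M) (x : M) : Measure M := (orbContent f x).measure

theorem orbMeasure_univ (f : M → M) (x : M) : orbMeasure f x Set.univ = 1 := by
  rw [orbMeasure, Content.measure_apply _ MeasurableSet.univ]
  apply le_antisymm
  · have h := Content.outerMeasure_le (orbContent f x) ⟨Set.univ, isOpen_univ⟩
      ⟨Set.univ, isCompact_univ⟩ subset_rfl
    calc (orbContent f x).outerMeasure Set.univ
        ≤ orbContent f x ⟨Set.univ, isCompact_univ⟩ := h
      _ = 1 := by rw [orbContent_apply]; exact lam_univ f x
  · have h := Content.le_outerMeasure_compacts (orbContent f x) ⟨Set.univ, isCompact_univ⟩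
    calc (1 : ℝ≥0∞) = orbContent f x ⟨Set.univ, isCompact_univ⟩ := by
          rw [orbContent_apply]; exact (lam_univ f x).symm
      _ ≤ _ := h

theorem orbMeasure_map (f : M ≃ₜ M) (x : M) : (orbMeasure (⇑f) x).map (⇑f) = orbMeasure (⇑f) x := by
  refine Measure.ext fun s hs => ?_
  rw [Measure.map_apply f.continuous.measurable hs, orbMeasure,
    Content.measure_apply _ (hs.preimage f.continuous.measurable), Content.measure_apply _ hs]
  refine Content.outerMeasure_preimage (orbContent (⇑f) x) f (fun K => ?_) s
  rw [orbContent_apply, orbContent_apply]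
  have h1 : ((K.map f f.continuous : Compacts M) : Set M) = ⇑f '' (K : Set M) := rfl
  rw [h1]
  exact lam_image f.injective x (K : Set M)

theorem orbMeasure_compl (f : M → M) (x : M) {C : Set M} (hC : IsClosed C)
    (horb : ∀ k, f^[k] x ∈ C) : orbMeasure f x Cᶜ = 0 := by
  rw [orbMeasure, Content.measure_apply _ hC.measurableSet.compl,
    Content.outerMeasure_of_isOpen _ _ hC.isOpen_compl]
  refine le_antisymm ?_ zero_le
  rw [Content.innerContent]
  refine iSup₂_le fun K hK => ?_
  rw [orbContent_apply, lam_zero f x (fun k hk => (hK hk) (horb k))]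

end ShadowAux


/-- `f` admits an invariant positively shadowable probability measure
iff there is a point that is both positively shadowable and chain-recurrent. -/
theorem invariant_posShadowableMeasure_iff {M : Type*} [MetricSpace M] [CompactSpace M]
    [MeasurableSpace M] [BorelSpace M] (f : M ≃ₜ M) :
    (∃ μ : Measure M, IsProbabilityMeasure μ ∧ μ.map (⇑f) = μ ∧
        PosShadowableMeasure (⇑f) μ) ↔
      ∃ x : M, PosShadowable (⇑f) x ∧ ChainRec (⇑f) x := by
  constructor
  · rintro ⟨μ, hprob, hmap, hps⟩
    haveI := hprob
    have hmp : MeasurePreserving (⇑f) μ μ := ⟨f.continuous.measurable, hmap⟩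
    have hrec := hmp.conservative.ae_frequently_mem_of_mem_nhds
    choose B δ hδ hB hsh using fun n : ℕ => hps (1/((n:ℝ)+1)) (by positivity)
    have hBc : ∀ n, μ (closure (B n)) = 1 := fun n =>
      le_antisymm prob_le_one ((hB n).symm.le.trans (measure_mono subset_closure))
    have hae1 : ∀ᵐ y ∂μ, ∀ n : ℕ, y ∈ closure (B n) := by
      rw [MeasureTheory.ae_all_iff]
      intro n
      rw [MeasureTheory.ae_iff]
      have h4 : {y | ¬ y ∈ closure (B n)} = (closure (B n))ᶜ := rfl
      rw [h4]
      exact (prob_compl_eq_zero_iff isClosed_closure.measurableSet).2 (hBc n)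
    haveI : (MeasureTheory.ae μ).NeBot := MeasureTheory.ae_neBot.2 (IsProbabilityMeasure.ne_zero μ)
    obtain ⟨y, hy1, hy2⟩ := (hae1.and hrec).exists
    refine ⟨y, ?_, ?_⟩
    · intro ε hε
      obtain ⟨n, hn⟩ := exists_nat_one_div_lt (by linarith : (0:ℝ) < ε/2)
      refine ⟨δ n / 2, by linarith [hδ n], ?_⟩
      intro p hp0 hpo
      obtain ⟨z, hz⟩ := ShadowAux.shadow_closure f.continuous (hδ n) (hsh n) (hy1 n)
        (by positivity) p hp0 hpo
      exact ⟨z, fun i => (hz i).trans (by linarith)⟩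
    · intro d hd
      obtain ⟨k, hk, hk1⟩ := ((hy2 (Metric.ball y d) (Metric.ball_mem_nhds y hd)).and_eventually
        (Filter.eventually_ge_atTop 1)).exists
      refine ⟨k, fun i => if i = k then y else (⇑f)^[i] y, by omega, ?_, by simp, ?_⟩
      · show (if (0:ℕ) = k then y else (⇑f)^[0] y) = y
        rw [if_neg (by omega)]
        exact Function.iterate_zero_apply (⇑f) y
      · intro i hi
        show dist (f (if i = k then y else (⇑f)^[i] y)) (if i + 1 = k then y else (⇑f)^[i+1] y) ≤ d
        rw [if_neg (by omega : ¬ i = k)]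
        by_cases h : i + 1 = k
        · rw [if_pos h]
          have h2 : f ((⇑f)^[i] y) = (⇑f)^[k] y := by
            rw [← h, Function.iterate_succ_apply']
          rw [h2]
          exact le_of_lt (Metric.mem_ball.1 hk)
        · rw [if_neg h, Function.iterate_succ_apply']
          simp [hd.le]
  · rintro ⟨x, hx, hcr⟩
    have horb : ∀ k, (⇑f)^[k] x ∈ {y | ChainLe (⇑f) x y} := fun k =>
      ShadowAux.chainLe_iterate hcr k
    have hCcl := ShadowAux.isClosed_setOf_chainLe (⇑f) x
    have hC1 : ShadowAux.orbMeasure (⇑f) x {y | ChainLe (⇑f) x y} = 1 := by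
      have h0 := ShadowAux.orbMeasure_compl (⇑f) x hCcl horb
      have h2 := measure_compl hCcl.measurableSet.compl (by rw [h0]; exact ENNReal.zero_ne_top)
      rw [compl_compl] at h2
      rw [h2, h0, ShadowAux.orbMeasure_univ, tsub_zero]
    refine ⟨ShadowAux.orbMeasure (⇑f) x, ⟨ShadowAux.orbMeasure_univ (⇑f) x⟩,
      ShadowAux.orbMeasure_map f x, ?_⟩
    intro ε hε
    obtain ⟨δ, hδ, hsh⟩ := hx ε hε
    refine ⟨{y | ChainLe (⇑f) x y}, δ, hδ, hC1, ?_⟩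
    intro p hp0 hpo
    exact ShadowAux.shadow_of_chainFrom hsh (hp0 δ hδ) p rfl hpo
end

section
/- Let f: M → M be a homeomorphism of a compact metric space and let x be a positively shadowable chain-recurrent point. Then the set of minimal points of f is dense in the chain-recurrence class H(x): every nonempty open subset of H(x) (relative to M) contains a point belonging to some minimal set of f. -/
open Function Metric

/-- A minimal set: a nonempty closed invariant set with no proper nonempty closed
invariant subset. -/
def IsMinimalSet {M : Type*} [MetricSpace M] (f : M → M) (K : Set M) : Prop :=
  K.Nonempty ∧ IsClosed K ∧ f '' K = K ∧
    ∀ K' ⊆ K, K'.Nonempty → IsClosed K' → f '' K' = K' → K' = K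

section Aux
variable {M : Type*} [MetricSpace M] [CompactSpace M]

lemma image_iterate_inv {g : M → M} {L : Set M} (h : g '' L = L) (k : ℕ) :
    g^[k] '' L = L := by
  induction k with
  | zero => simp
  | succ k ih => rw [Function.iterate_succ, Set.image_comp, h, ih]

lemma exists_isMinimalSet {g : M → M} (hg : Continuous g) {S : Set M}
    (hne : S.Nonempty) (hcl : IsClosed S) (hinv : g '' S ⊆ S) :
    ∃ K, K ⊆ S ∧ IsMinimalSet g K := by
  set F : Set (Set M) := {K | K ⊆ S ∧ K.Nonempty ∧ IsClosed K ∧ g '' K ⊆ K} with hF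
  have hchaincond : ∀ c ⊆ F, IsChain (· ⊆ ·) c → c.Nonempty →
      ∃ lb ∈ F, ∀ s ∈ c, lb ⊆ s := by
    intro c hcF hchain hcne
    refine ⟨⋂₀ c, ⟨?_, ?_, ?_, ?_⟩, fun s hs => Set.sInter_subset_of_mem hs⟩
    · obtain ⟨s, hs⟩ := hcne
      exact (Set.sInter_subset_of_mem hs).trans (hcF hs).1
    · have : Nonempty c := hcne.to_subtype
      have hdir : DirectedOn (· ⊇ ·) c := by
        intro a ha b hb
        rcases hchain.total ha hb with h | h
        · exact ⟨a, ha, Set.Subset.rfl, h⟩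
        · exact ⟨b, hb, h, Set.Subset.rfl⟩
      exact IsCompact.nonempty_sInter_of_directed_nonempty_isCompact_isClosed
        (hdir) (fun U hU => (hcF hU).2.1)
        (fun U hU => (hcF hU).2.2.1.isCompact) (fun U hU => (hcF hU).2.2.1)
    · exact isClosed_sInter fun U hU => (hcF hU).2.2.1
    · rintro a ⟨b, hb, rfl⟩ s hs
      exact (hcF hs).2.2.2 ⟨b, hb s hs, rfl⟩
  obtain ⟨m, hmS, hmF, hmin⟩ :=
    zorn_superset_nonempty F hchaincond S ⟨Set.Subset.rfl, hne, hcl, hinv⟩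
  obtain ⟨hm1, hm2, hm3, hm4⟩ := hmF
  have himgF : g '' m ∈ F := ⟨hm4.trans hm1, hm2.image g,
      ((hm3.isCompact).image hg).isClosed, Set.image_mono hm4⟩
  have hinv' : g '' m = m := Set.Subset.antisymm hm4 (hmin himgF hm4)
  refine ⟨m, hm1, hm2, hm3, hinv', ?_⟩
  intro K' hK' hK'ne hK'cl hK'inv
  exact Set.Subset.antisymm hK'
    (hmin ⟨hK'.trans hm1, hK'ne, hK'cl, hK'inv.le⟩ hK')

lemma isMinimalSet_image {g φ ψ : M → M} (hφ : Continuous φ) (hψ : Continuous ψ)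
    (hlr : ∀ a, ψ (φ a) = a) (hrl : ∀ a, φ (ψ a) = a)
    (hcomm : ∀ a, φ (g a) = g (φ a)) {K : Set M} (hK : IsMinimalSet g K) :
    IsMinimalSet g (φ '' K) := by
  obtain ⟨hne, hcl, hinv, hmin⟩ := hK
  have hψcomm : ∀ a, ψ (g a) = g (ψ a) := by
    intro a
    have h := hcomm (ψ a)
    rw [hrl] at h
    rw [← h, hlr]
  have hcφ : φ ∘ g = g ∘ φ := funext hcomm
  have hcψ : ψ ∘ g = g ∘ ψ := funext hψcomm
  have hψφ : ψ ∘ φ = id := funext hlr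
  have hφψ : φ ∘ ψ = id := funext hrl
  refine ⟨hne.image φ, (hcl.isCompact.image hφ).isClosed, ?_, ?_⟩
  · rw [← Set.image_comp, ← hcφ, Set.image_comp, hinv]
  · intro K' hK'sub hK'ne hK'cl hK'inv
    have hKeq : ψ '' K' = K := by
      refine hmin (ψ '' K') ?_ (hK'ne.image ψ) ((hK'cl.isCompact.image hψ).isClosed) ?_
      · calc ψ '' K' ⊆ ψ '' (φ '' K) := Set.image_mono hK'sub
          _ = K := by rw [← Set.image_comp, hψφ, Set.image_id]
      · rw [← Set.image_comp, ← hcψ, Set.image_comp, hK'inv]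
    calc K' = φ '' (ψ '' K') := by rw [← Set.image_comp, hφψ, Set.image_id]
      _ = φ '' K := by rw [hKeq]

end Aux

/-- minimal points are dense in the chain-recurrence class of a
positively shadowable chain-recurrent point. -/
theorem minimal_points_dense_in_chainClass {M : Type*} [MetricSpace M] [CompactSpace M]
    (f : M ≃ₜ M) (x : M) (h1 : PosShadowable (⇑f) x) (h2 : ChainRec (⇑f) x) :
    ∀ U : Set M, IsOpen U → (U ∩ ChainClass (⇑f) x).Nonempty →
      ∃ p ∈ U, ∃ K : Set M, IsMinimalSet (⇑f) K ∧ p ∈ K := by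
  rintro U hU ⟨z, hzU, hxz, hzx⟩
  obtain ⟨r, hr, hball⟩ := Metric.isOpen_iff.mp hU z hzU
  obtain ⟨δ, hδ, hsh⟩ := h1 (r / 2) (by positivity)
  obtain ⟨m, c1, hm, hc10, hc1m, hc1s⟩ := hxz δ hδ
  obtain ⟨n, c2, hn, hc20, hc2n, hc2s⟩ := hzx δ hδ
  set N := m + n with hNdef
  have hNpos : 0 < N := by omega
  have hN2 : 1 < N := by omega
  set e : ℕ → M := fun j => if j ≤ n then c2 j else c1 (j - n) with he
  set y : ℕ → M := fun i => if i < m then c1 i else e ((i - m) % N) with hy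
  have he0 : e 0 = z := by
    simp only [he]
    rw [if_pos (Nat.zero_le n)]
    exact hc20
  have heN : e N = z := by
    simp only [he]
    rw [if_neg (by omega), show N - n = m from by omega]
    exact hc1m
  have hestep : ∀ s < N, dist (f (e s)) (e (s + 1)) ≤ δ := by
    intro s hs
    rcases lt_trichotomy s n with hsn | rfl | hsn
    · have h1' : s ≤ n := le_of_lt hsn
      have h2' : s + 1 ≤ n := hsn
      simp only [he, if_pos h1', if_pos h2']
      exact hc2s s hsn
    · have hx0 := hc1s 0 hm
      rw [hc10] at hx0
      simp only [he, if_pos (le_refl s), if_neg (show ¬ s + 1 ≤ s by omega),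
        show s + 1 - s = 1 from by omega, hc2n]
      exact hx0
    · simp only [he, if_neg (show ¬ s ≤ n by omega), if_neg (show ¬ s + 1 ≤ n by omega),
        show s + 1 - n = (s - n) + 1 from by omega]
      exact hc1s (s - n) (by omega)
  have hy0 : y 0 = x := by
    simp only [hy]
    rw [if_pos hm]
    exact hc10
  have hyPO : IsPO (⇑f) δ y := by
    intro i
    by_cases hi : i + 1 < m
    · have hi' : i < m := by omega
      simp only [hy, if_pos hi, if_pos hi']
      exact hc1s i hi'
    · by_cases hi2 : i < m
      · have him : i + 1 = m := by omega
        have hstep := hc1s i hi2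
        rw [him, hc1m] at hstep
        simp only [hy, if_pos hi2, if_neg hi]
        rw [show (i + 1 - m) % N = 0 from by rw [him]; simp, he0]
        exact hstep
      · have him : m ≤ i := by omega
        have hsN : (i - m) % N < N := Nat.mod_lt _ hNpos
        have harith : (i + 1 - m) % N = ((i - m) % N + 1) % N := by
          rw [show i + 1 - m = (i - m) + 1 from by omega, Nat.add_mod,
            Nat.mod_eq_of_lt hN2]
        simp only [hy, if_neg hi2, if_neg hi, harith]
        by_cases hs1 : (i - m) % N + 1 < N
        · rw [Nat.mod_eq_of_lt hs1]
          exact hestep _ hsN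
        · have hseq : (i - m) % N + 1 = N := by omega
          have hst := hestep _ hsN
          rw [hseq, heN] at hst
          rw [hseq, Nat.mod_self, he0]
          exact hst
  obtain ⟨p, hp⟩ := hsh y hy0 hyPO
  set g : M → M := (⇑f)^[N] with hgdef
  have hgc : Continuous g := f.continuous.iterate N
  set q : M := (⇑f)^[m] p with hq
  have hqorb : ∀ k, g^[k] q ∈ closedBall z (r / 2) := by
    intro k
    have h1' : y (m + N * k) = z := by
      simp only [hy, if_neg (show ¬ m + N * k < m by omega)]
      rw [show m + N * k - m = N * k from by omega, Nat.mul_mod_right, he0]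
    have h2' := hp (m + N * k)
    rw [h1'] at h2'
    have h3' : g^[k] q = (⇑f)^[m + N * k] p := by
      rw [hq, hgdef, ← Function.iterate_mul, ← Function.iterate_add_apply, Nat.add_comm]
    rw [mem_closedBall, h3']
    exact h2'
  set S : Set M := closure (Set.range fun k => g^[k] q) with hS
  have hSsub : S ⊆ closedBall z (r / 2) := by
    apply closure_minimal _ isClosed_closedBall
    rintro a ⟨k, rfl⟩
    exact hqorb k
  have hSne : S.Nonempty := ⟨q, subset_closure ⟨0, rfl⟩⟩
  have hSinv : g '' S ⊆ S := by
    apply Set.mapsTo_iff_image_subset.mp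
    apply Set.MapsTo.closure _ hgc
    rintro a ⟨k, rfl⟩
    exact ⟨k + 1, Function.iterate_succ_apply' g k q⟩
  obtain ⟨K, hKS, hKmin⟩ := exists_isMinimalSet hgc hSne isClosed_closure hSinv
  obtain ⟨p', hp'K⟩ := hKmin.1
  -- the closure of the f-orbit of p'
  set T : Set M := closure (Set.range fun i => (⇑f)^[i] p') with hT
  have hTne : T.Nonempty := ⟨p', subset_closure ⟨0, rfl⟩⟩
  have hTinv : (⇑f) '' T ⊆ T := by
    apply Set.mapsTo_iff_image_subset.mp
    apply Set.MapsTo.closure _ f.continuous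
    rintro a ⟨i, rfl⟩
    exact ⟨i + 1, Function.iterate_succ_apply' (⇑f) i p'⟩
  obtain ⟨L, hLT, hLmin⟩ := exists_isMinimalSet f.continuous hTne isClosed_closure hTinv
  -- T is covered by the sets f^[j] '' K, j < N
  have hTW : T ⊆ ⋃ j : Fin N, (⇑f)^[↑j] '' K := by
    apply closure_minimal _ (isClosed_iUnion_of_finite fun j : Fin N =>
      ((hKmin.2.1.isCompact.image (f.continuous.iterate _)).isClosed))
    rintro a ⟨i, rfl⟩
    refine Set.mem_iUnion.mpr ⟨⟨i % N, Nat.mod_lt _ hNpos⟩, ?_⟩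
    have hin : g^[i / N] p' ∈ K := by
      rw [← image_iterate_inv hKmin.2.2.1 (i / N)]
      exact ⟨p', hp'K, rfl⟩
    refine ⟨g^[i / N] p', hin, ?_⟩
    show (⇑f)^[i % N] (g^[i / N] p') = (⇑f)^[i] p'
    rw [hgdef, ← Function.iterate_mul, ← Function.iterate_add_apply, Nat.mod_add_div]
  obtain ⟨a, haL⟩ := hLmin.1
  obtain ⟨⟨j, hjN⟩, haj⟩ := Set.mem_iUnion.mp (hTW (hLT haL))
  -- f^[j] '' K is also a minimal set for g
  have hlr : ∀ b, (⇑f.symm)^[j] ((⇑f)^[j] b) = b :=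
    Function.LeftInverse.iterate f.symm_apply_apply j
  have hrl : ∀ b, (⇑f)^[j] ((⇑f.symm)^[j] b) = b :=
    Function.LeftInverse.iterate f.apply_symm_apply j
  have hcomm : ∀ b, (⇑f)^[j] (g b) = g ((⇑f)^[j] b) := by
    intro b
    rw [hgdef, ← Function.iterate_add_apply, ← Function.iterate_add_apply, Nat.add_comm]
  have hφK : IsMinimalSet g ((⇑f)^[j] '' K) :=
    isMinimalSet_image (f.continuous.iterate j) (f.symm.continuous.iterate j)
      hlr hrl hcomm hKmin
  -- L ∩ f^[j] '' K is nonempty, closed, g-subinvariant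
  have hgL : g '' L ⊆ L := by
    rw [hgdef, image_iterate_inv hLmin.2.2.1 N]
  have hDinv : g '' (L ∩ (⇑f)^[j] '' K) ⊆ L ∩ (⇑f)^[j] '' K := by
    refine (Set.image_inter_subset _ _ _).trans ?_
    exact Set.inter_subset_inter hgL (le_of_eq hφK.2.2.1)
  have hDcl : IsClosed (L ∩ (⇑f)^[j] '' K) :=
    hLmin.2.1.inter (hKmin.2.1.isCompact.image (f.continuous.iterate j)).isClosed
  have hDne : (L ∩ (⇑f)^[j] '' K).Nonempty := ⟨a, haL, haj⟩
  obtain ⟨K'', hK''D, hK''min⟩ := exists_isMinimalSet hgc hDne hDcl hDinv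
  have hK''eq : K'' = (⇑f)^[j] '' K :=
    hφK.2.2.2 K'' (hK''D.trans Set.inter_subset_right) hK''min.1 hK''min.2.1 hK''min.2.2.1
  have hφKL : (⇑f)^[j] '' K ⊆ L := by
    rw [← hK''eq]
    exact hK''D.trans Set.inter_subset_left
  -- hence K ⊆ L
  have h5 : (⇑f)^[N - j] '' ((⇑f)^[j] '' K) = K := by
    rw [← Set.image_comp, ← Function.iterate_add, Nat.sub_add_cancel (le_of_lt hjN),
      ← hgdef, hKmin.2.2.1]
  have hKL : K ⊆ L := by
    rw [← h5, ← image_iterate_inv hLmin.2.2.1 (N - j)]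
    exact Set.image_mono hφKL
  refine ⟨p', hball ?_, L, hLmin, hKL hp'K⟩
  exact closedBall_subset_ball (by linarith) (hSsub (hKS hp'K))
end

section
/- Let f: M → M be a homeomorphism of a compact metric space and x ∈ M a non-periodic recurrent point that is countable-expansive, meaning there exists e > 0 such that the dynamical ball B^∞_e(x) = {y : d(f^n(x), f^n(y)) ≤ e for all n ∈ ℤ} is countable. Then there is a constant C > 0 such that for every nonempty relatively open subset U of the orbit closure of x, there exists n ∈ ℤ with diam(f^n(U)) > C. -/
open Function Metric

section Helpers
variable {M : Type*} [MetricSpace M]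

lemma zIter_add (f : M ≃ₜ M) (m n : ℤ) (p : M) :
    zIter f (m + n) p = zIter f m (zIter f n p) := by
  simp [zIter, zpow_add, Equiv.Perm.mul_apply]

lemma zIter_zero (f : M ≃ₜ M) (p : M) : zIter f 0 p = p := by
  simp [zIter]

lemma zIter_natCast (f : M ≃ₜ M) (k : ℕ) (p : M) : zIter f (k : ℤ) p = (⇑f)^[k] p := by
  simp only [zIter, zpow_natCast]
  rw [← Equiv.Perm.iterate_eq_pow]
  induction k with
  | zero => rfl
  | succ n ih => simp [Function.iterate_succ_apply', ih]

lemma zIter_injective (f : M ≃ₜ M) (n : ℤ) : Injective (zIter f n) :=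
  (f.toEquiv ^ n).injective

lemma zIter_continuous (f : M ≃ₜ M) (n : ℤ) : Continuous (zIter f n) := by
  rcases n with k | k
  · have : zIter f (Int.ofNat k) = (⇑f)^[k] := by
      funext p; exact zIter_natCast f k p
    rw [this]
    exact f.continuous.iterate k
  · have : zIter f (Int.negSucc k) = (⇑f.symm)^[k + 1] := by
      funext p
      simp only [zIter, zpow_negSucc, ← inv_pow, ← Equiv.Perm.iterate_eq_pow]
      have h1 : (f.toEquiv)⁻¹ = f.symm.toEquiv := rfl
      rw [h1]
      induction (k+1) with
      | zero => rfl
      | succ n ih => simp [Function.iterate_succ_apply', ih]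
    rw [this]
    exact f.symm.continuous.iterate (k + 1)

end Helpers

section Main
variable {M : Type*} [MetricSpace M] [CompactSpace M]

omit [CompactSpace M] in
lemma orbit_preperfect (f : M ≃ₜ M) (x : M)
    (hnp : ∀ n : ℕ, 0 < n → (⇑f)^[n] x ≠ x)
    (hrec : ∀ ε > 0, ∀ N : ℕ, ∃ n ≥ N, 0 < n ∧ dist ((⇑f)^[n] x) x < ε) :
    Preperfect (Set.range fun n : ℤ => zIter f n x) := by
  rw [preperfect_iff_nhds]
  rintro p ⟨m, rfl⟩ U hU
  have hc : ContinuousAt (zIter f m) x := (zIter_continuous f m).continuousAt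
  have hpre : zIter f m ⁻¹' U ∈ nhds x := hc.preimage_mem_nhds hU
  obtain ⟨ε, hε, hball⟩ := Metric.mem_nhds_iff.mp hpre
  obtain ⟨n, -, hn0, hdist⟩ := hrec ε hε 1
  refine ⟨zIter f (m + n) x, ⟨?_, ⟨m + n, rfl⟩⟩, ?_⟩
  · rw [zIter_add]
    apply hball
    rw [Metric.mem_ball, zIter_natCast]
    exact hdist
  · intro hEq
    apply hnp n hn0
    have h2 : zIter f m (zIter f n x) = zIter f m x := by
      rw [← zIter_add]; exact hEq
    have := zIter_injective f m h2
    rw [zIter_natCast] at this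
    exact this

lemma uncountable_test : ¬ Countable (ℕ → Bool) := by
  intro h
  have : Countable (Set ℕ) := by
    have e : (ℕ → Bool) ≃ Set ℕ :=
      (Equiv.arrowCongr (Equiv.refl ℕ) Equiv.propEquivBool).symm
    exact Countable.of_equiv _ e
  obtain ⟨g, hg⟩ := exists_injective_nat (Set ℕ)
  exact Function.cantor_injective g hg

end Main

/-- a non-periodic recurrent countable-expansive point has uniformly
expanded relatively open subsets of its orbit closure. -/
theorem countable_expansive_expansion {M : Type*} [MetricSpace M] [CompactSpace M]
    (f : M ≃ₜ M) (x : M)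
    (hnp : ∀ n : ℕ, 0 < n → (⇑f)^[n] x ≠ x)
    (hrec : ∀ ε > 0, ∀ N : ℕ, ∃ n ≥ N, 0 < n ∧ dist ((⇑f)^[n] x) x < ε)
    (hce : ∃ e > 0, Set.Countable {y : M | ∀ n : ℤ, dist (zIter f n x) (zIter f n y) ≤ e}) :
    ∃ C > 0, ∀ V : Set M, IsOpen V →
      (V ∩ closure (Set.range fun n : ℤ => zIter f n x)).Nonempty →
        ∃ n : ℤ, C < diam (zIter f n ''
          (V ∩ closure (Set.range fun n : ℤ => zIter f n x))) := by
  obtain ⟨e, he, hcnt⟩ := hce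
  refine ⟨e, he, fun V hV hne => ?_⟩
  by_contra hcon
  push_neg at hcon
  set K := closure (Set.range fun n : ℤ => zIter f n x) with hK
  set U := V ∩ K with hU
  -- find an orbit point in U
  obtain ⟨p₀, hp₀V, hp₀K⟩ := hne
  obtain ⟨q, hqV, hqR⟩ := (mem_closure_iff_nhds.mp hp₀K V (hV.mem_nhds hp₀V))
  obtain ⟨k, rfl⟩ := hqR
  set q : M := zIter f k x with hq
  have hqK : q ∈ K := subset_closure ⟨k, rfl⟩
  have hqU : q ∈ U := ⟨hqV, hqK⟩
  -- U is countable
  have hsub : U ⊆ zIter f k '' {y : M | ∀ n : ℤ, dist (zIter f n x) (zIter f n y) ≤ e} := by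
    intro z hz
    refine ⟨zIter f (-k) z, fun n => ?_, ?_⟩
    · have h1 : zIter f n (zIter f (-k) z) = zIter f (n - k) z := by
        rw [← zIter_add]; ring_nf
      have h2 : zIter f n x = zIter f (n - k) q := by
        rw [hq, ← zIter_add]; ring_nf
      rw [h1, h2]
      calc dist (zIter f (n - k) q) (zIter f (n - k) z)
          ≤ diam (zIter f (n - k) '' U) :=
            dist_le_diam_of_mem isBounded_of_compactSpace ⟨q, hqU, rfl⟩ ⟨z, hz, rfl⟩
        _ ≤ e := hcon (n - k)
    · rw [← zIter_add]
      simp [zIter_zero]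
  have hUcnt : U.Countable := ((hcnt.image (zIter f k)).mono hsub)
  -- build a perfect subset of U
  have hKperf : Perfect K := (orbit_preperfect f x hnp hrec).perfect_closure
  obtain ⟨ε, hε, hball⟩ := Metric.isOpen_iff.mp hV q hqV
  have hSpre : Preperfect (ball q (ε / 2) ∩ K) :=
    hKperf.acc.open_inter isOpen_ball
  set D := closure (ball q (ε / 2) ∩ K) with hD
  have hDperf : Perfect D := hSpre.perfect_closure
  have hDne : D.Nonempty := ⟨q, subset_closure ⟨mem_ball_self (by linarith), hqK⟩⟩
  have hDU : D ⊆ U := by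
    intro z hz
    constructor
    · apply hball
      have h1 : z ∈ closedBall q (ε / 2) :=
        (closure_mono Set.inter_subset_left).trans closure_ball_subset_closedBall hz
      exact (closedBall_subset_ball (by linarith)) h1
    · exact (closure_mono Set.inter_subset_right).trans (by rw [hK, closure_closure]) hz
  obtain ⟨g, hgD, -, hginj⟩ := hDperf.exists_nat_bool_injection hDne
  have hrg : (Set.range g).Countable := (hUcnt.mono hDU).mono hgD
  have : Countable (ℕ → Bool) := by
    have := hrg.to_subtype
    exact Countable.of_equiv _ (Equiv.ofInjective g hginj).symm
  exact uncountable_test this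
end
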